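/- arXiv:2512.07607 — 2 statements merged into one kernel-verified Lean document; each statement's English description precedes it below -/
import Mathlib

section
/- Let K be an A-field and Υ a triangular t-module of dimension n over K whose diagonal Drinfeld modules ψ_1,…,ψ_n all have the same rank r (i.e. Υ is almost strictly pure). Then there exist a finite field extension L of K and a lower triangular matrix V ∈ Mat_n(L{τ}) with all diagonal entries equal to 1 such that V·Υ_t·V^{−1} is lower triangular with the same diagonal entries, has τ-degree r, and its leading coefficient matrix (the entrywise matrix of coefficients of τ^r) is invertible; that is, Υ becomes isomorphic over L to a strictly pure t-module. -/
open Polynomial Matrix Finset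

noncomputable section

/-- Twisted ("skew") multiplication of polynomials in `τ`, determined by the rule
`τ · c = c^q · τ`:  `(Σᵢ aᵢτ^i) · (Σⱼ bⱼτ^j) = Σ_{i,j} aᵢ bⱼ^(q^i) τ^(i+j)`. -/
def twMul {K : Type*} [Field K] (q : ℕ) (f g : Polynomial K) : Polynomial K :=
  f.sum fun i a => g.sum fun j b => Polynomial.C (a * b ^ q ^ i) * Polynomial.X ^ (i + j)

/-- Twisted multiplication of matrices over the twisted polynomial ring `K{τ}`. -/
def twMatMul {K : Type*} [Field K] (q : ℕ) {α β γ : Type*} [Fintype β]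
    (A : Matrix α β (Polynomial K)) (B : Matrix β γ (Polynomial K)) :
    Matrix α γ (Polynomial K) :=
  Matrix.of fun i k => ∑ j, twMul q (A i j) (B j k)

/-- `ψ` is (the value at `t` of) a Drinfeld module of rank `r` over the `A`-field `(K, θ)`. -/
def IsDrinfeld {K : Type*} [Field K] (θ : K) (r : ℕ) (ψ : Polynomial K) : Prop :=
  1 ≤ r ∧ ψ.coeff 0 = θ ∧ ψ.natDegree = r ∧ ψ.coeff r ≠ 0

/-- `Υ` is (the value at `t` of) a triangular t-module of dimension `n` with diagonal
Drinfeld modules `ψ 0 = ψ₁, …, ψ (n-1) = ψₙ` of ranks `r 0, …, r (n-1)`:  `Υ` is lower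
triangular and its `(k,k)` diagonal entry is `ψ k.rev` (so `ψₙ` is top-left and
`ψ₁` is bottom-right). -/
def IsTriangular {K : Type*} [Field K] (θ : K) {n : ℕ}
    (Υ : Matrix (Fin n) (Fin n) (Polynomial K))
    (ψ : Fin n → Polynomial K) (r : Fin n → ℕ) : Prop :=
  (∀ i j : Fin n, i < j → Υ i j = 0) ∧
  (∀ k : Fin n, Υ k k = ψ k.rev) ∧
  (∀ i : Fin n, IsDrinfeld θ (r i) (ψ i))

/-!
Over an algebraically closed field, conjugating `Υ` by `1 + e E_{ij}` with `j < i` replaces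
`Υ_{ij}` by `Υ_{ij} + e ψ_j - ψ_i e` and otherwise only changes entries in row `i` left of `j`
and in column `j` below `i`. As `ψ_i` and `ψ_j` have degree `r` with `q^r > 1`, the top
coefficient of `Υ_{ij} + c τ^m ψ_j - ψ_i c τ^m` can be killed by a root `c` of
`ψ_{i,r} c^{q^r} = ψ_{j,r}^{q^m} c + t`, so a twisted division with remainder brings `Υ_{ij}` to
degree `≤ r`. Treating the entries row by row from the top, each row from right to left, never
disturbs an entry already treated. The coefficient matrix of `τ^r` is then lower triangular with
the nonzero leading coefficients of the `ψ_k` on its diagonal. Finally, the finitely many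
coefficients involved generate a finite extension of `K`.
-/

section TwistedPolynomial

variable {F : Type*} [Field F] {q : ℕ}

@[simp]
lemma zero_twMul (g : F[X]) : twMul q 0 g = 0 := by
  simp [twMul, Polynomial.sum_def]

@[simp]
lemma twMul_zero (f : F[X]) : twMul q f 0 = 0 := by
  simp [twMul, Polynomial.sum_def]

lemma add_twMul (f₁ f₂ g : F[X]) : twMul q (f₁ + f₂) g = twMul q f₁ g + twMul q f₂ g := by
  unfold twMul
  rw [Polynomial.sum_add_index]
  · simp [Polynomial.sum_def]
  · intro i b₁ b₂
    rw [← Polynomial.sum_add]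
    congr 1; funext j b
    rw [add_mul, C_add, add_mul]

lemma sum_twMul {κ : Type*} (t : Finset κ) (f : κ → F[X]) (g : F[X]) :
    twMul q (∑ x ∈ t, f x) g = ∑ x ∈ t, twMul q (f x) g :=
  map_sum (AddMonoidHom.mk' (twMul q · g) fun _ _ => add_twMul _ _ _) f t

lemma one_twMul (f : F[X]) : twMul q 1 f = f := by
  unfold twMul
  rw [← C_1, Polynomial.sum_C_index (by simp [Polynomial.sum_def])]
  simpa using f.sum_C_mul_X_pow_eq

lemma twMul_one (hq : q ≠ 0) (f : F[X]) : twMul q f 1 = f := by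
  have hmonomial (i : ℕ) (a : F) :
      ((1 : F[X]).sum fun j b => C (a * b ^ q ^ i) * X ^ (i + j)) = C a * X ^ i := by
    rw [← C_1, Polynomial.sum_C_index (by simp [zero_pow (pow_ne_zero i hq)])]
    simp
  simp only [twMul, hmonomial]
  exact f.sum_C_mul_X_pow_eq

lemma monomial_twMul_monomial (hq : q ≠ 0) (i j : ℕ) (a b : F) :
    twMul q (monomial i a) (monomial j b) = monomial (i + j) (a * b ^ q ^ i) := by
  unfold twMul
  rw [Polynomial.sum_monomial_index _ _ (by simp),
    Polynomial.sum_monomial_index _ _ (by simp [zero_pow (pow_ne_zero i hq)]),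
    C_mul_X_pow_eq_monomial]

lemma coeff_monomial_twMul (hq : q ≠ 0) (m : ℕ) (c : F) (g : F[X]) (k : ℕ) :
    (twMul q (monomial m c) g).coeff k = if m ≤ k then c * g.coeff (k - m) ^ q ^ m else 0 := by
  unfold twMul
  rw [Polynomial.sum_monomial_index _ _ (by simp [Polynomial.sum_def]), Polynomial.sum_def,
    finsetSum_coeff]
  simp only [C_mul_X_pow_eq_monomial, coeff_monomial]
  split_ifs with hmk
  · rw [Finset.sum_eq_single (k - m) (fun j _ hj => if_neg (by omega)) (fun hj => ?_),
      if_pos (by omega)]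
    rw [notMem_support_iff.mp hj, zero_pow (pow_ne_zero m hq), mul_zero, ite_self]
  · exact Finset.sum_eq_zero fun j _ => if_neg (by omega)

lemma coeff_twMul_monomial (hq : q ≠ 0) (m : ℕ) (c : F) (f : F[X]) (k : ℕ) :
    (twMul q f (monomial m c)).coeff k =
      if m ≤ k then f.coeff (k - m) * c ^ q ^ (k - m) else 0 := by
  have hmonomial (i : ℕ) (a : F) :
      ((monomial m c).sum fun j b => C (a * b ^ q ^ i) * X ^ (i + j)) =
        C (a * c ^ q ^ i) * X ^ (i + m) :=
    Polynomial.sum_monomial_index _ _ (by simp [zero_pow (pow_ne_zero i hq)])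
  simp only [twMul, hmonomial]
  rw [Polynomial.sum_def, finsetSum_coeff]
  simp only [C_mul_X_pow_eq_monomial, coeff_monomial]
  split_ifs with hmk
  · rw [Finset.sum_eq_single (k - m) (fun i _ hi => if_neg (by omega)) (fun hi => ?_),
      if_pos (by omega)]
    rw [notMem_support_iff.mp hi, zero_mul, ite_self]
  · exact Finset.sum_eq_zero fun i _ => if_neg (by omega)

lemma map_twMul {F' : Type*} [Field F'] (φ : F →+* F') (f g : F[X]) :
    (twMul q f g).map φ = twMul q (f.map φ) (g.map φ) := by
  simp [twMul, Polynomial.sum_def, support_map_of_injective _ φ.injective, Polynomial.map_sum]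

variable {p s : ℕ} [ExpChar F p]

lemma twMul_add (f g₁ g₂ : F[X]) :
    twMul (p ^ s) f (g₁ + g₂) = twMul (p ^ s) f g₁ + twMul (p ^ s) f g₂ := by
  unfold twMul
  rw [← Polynomial.sum_add]
  congr 1; funext i a
  rw [Polynomial.sum_add_index]
  · simp [zero_pow (pow_ne_zero i (pow_ne_zero s (expChar_ne_zero F p)))]
  · intro j b₁ b₂
    rw [← pow_mul, add_pow_expChar_pow, mul_add, C_add, add_mul]

lemma twMul_neg (f g : F[X]) : twMul (p ^ s) f (-g) = -twMul (p ^ s) f g :=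
  map_neg (AddMonoidHom.mk' (twMul (p ^ s) f) (twMul_add f)) g

lemma twMul_sum {κ : Type*} (t : Finset κ) (f : F[X]) (g : κ → F[X]) :
    twMul (p ^ s) f (∑ x ∈ t, g x) = ∑ x ∈ t, twMul (p ^ s) f (g x) :=
  map_sum (AddMonoidHom.mk' (twMul (p ^ s) f) (twMul_add f)) g t

lemma twMul_assoc (f g h : F[X]) :
    twMul (p ^ s) (twMul (p ^ s) f g) h = twMul (p ^ s) f (twMul (p ^ s) g h) := by
  have hq : p ^ s ≠ 0 := pow_ne_zero s (expChar_ne_zero F p)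
  induction f using Polynomial.induction_on' with
  | add f₁ f₂ ih₁ ih₂ => rw [add_twMul, add_twMul, add_twMul, ih₁, ih₂]
  | monomial i a =>
  induction g using Polynomial.induction_on' with
  | add g₁ g₂ ih₁ ih₂ => rw [twMul_add, add_twMul, ih₁, ih₂, add_twMul, twMul_add]
  | monomial j b =>
  induction h using Polynomial.induction_on' with
  | add h₁ h₂ ih₁ ih₂ => rw [twMul_add, twMul_add, twMul_add, ih₁, ih₂]
  | monomial k c =>
  simp only [monomial_twMul_monomial hq, add_assoc, mul_pow, mul_assoc, ← pow_mul, ← pow_add]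
  ring_nf

end TwistedPolynomial

section TwistedDivision

variable {F : Type*} [Field F] [IsAlgClosed F]

lemma exists_mul_pow_eq_mul_add {N : ℕ} (hN : 1 < N) {B : F} (hB : B ≠ 0) (A t : F) :
    ∃ c : F, B * c ^ N = A * c + t := by
  have hlead : (C B * X ^ N).natDegree = N := natDegree_C_mul_X_pow N B hB
  have hdeg : (C B * X ^ N - (C A * X + C t)).natDegree = N := by
    rw [natDegree_sub_eq_left_of_natDegree_lt (hlead.symm ▸ natDegree_linear_le.trans_lt hN), hlead]
  obtain ⟨c, hc⟩ := IsAlgClosed.exists_root (C B * X ^ N - (C A * X + C t))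
    (natDegree_pos_iff_degree_pos.1 (by omega)).ne'
  exact ⟨c, by simpa [sub_eq_zero] using hc⟩

variable {q r : ℕ}

lemma exists_natDegree_add_twMul_sub_twMul_lt (hq : 1 < q) (hr : 1 ≤ r) {ψ ψ' f : F[X]}
    (hψ : ψ.natDegree ≤ r) (hψ' : ψ'.natDegree ≤ r) (hlead : ψ.coeff r ≠ 0)
    (hf : r < f.natDegree) :
    ∃ e, (f + twMul q e ψ' - twMul q ψ e).natDegree < f.natDegree := by
  obtain ⟨D, hD⟩ : ∃ D, f.natDegree = D := ⟨_, rfl⟩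
  obtain ⟨c, hc⟩ := exists_mul_pow_eq_mul_add (N := q ^ r) (Nat.one_lt_pow (by omega) hq) hlead
    (ψ'.coeff r ^ q ^ (D - r)) (f.coeff D)
  suffices h : (f + twMul q (monomial (D - r) c) ψ' - twMul q ψ (monomial (D - r) c)).natDegree
      ≤ D - 1 from ⟨monomial (D - r) c, by omega⟩
  refine natDegree_le_iff_coeff_eq_zero.2 fun k hk => ?_
  rw [coeff_sub, coeff_add, coeff_monomial_twMul (by omega), coeff_twMul_monomial (by omega),
    if_pos (by omega), if_pos (by omega)]
  rcases (by omega : k = D ∨ D < k) with rfl | hDk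
  · rw [show k - (k - r) = r by omega]
    linear_combination -hc
  · rw [coeff_eq_zero_of_natDegree_lt (by omega : f.natDegree < k),
      coeff_eq_zero_of_natDegree_lt (by omega : ψ'.natDegree < k - (D - r)),
      coeff_eq_zero_of_natDegree_lt (by omega : ψ.natDegree < k - (D - r)),
      zero_pow (pow_ne_zero _ (by omega)), zero_mul, mul_zero]
    ring

variable {p s : ℕ} [ExpChar F p]

lemma exists_natDegree_add_twMul_sub_twMul_le (hq : 1 < p ^ s) (hr : 1 ≤ r) {ψ ψ' : F[X]}
    (hψ : ψ.natDegree ≤ r) (hψ' : ψ'.natDegree ≤ r) (hlead : ψ.coeff r ≠ 0) (f : F[X]) :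
    ∃ e, (f + twMul (p ^ s) e ψ' - twMul (p ^ s) ψ e).natDegree ≤ r := by
  induction hD : f.natDegree using Nat.strong_induction_on generalizing f with
  | _ D ih =>
  by_cases hfr : D ≤ r
  · exact ⟨0, by simpa [hD] using hfr⟩
  obtain ⟨e₁, he₁⟩ :=
    exists_natDegree_add_twMul_sub_twMul_lt hq hr hψ hψ' hlead (f := f) (by omega)
  obtain ⟨e₂, he₂⟩ := ih _ (hD ▸ he₁) _ rfl
  refine ⟨e₁ + e₂, ?_⟩
  rw [add_twMul, twMul_add]
  convert he₂ using 2
  ring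

end TwistedDivision

section TwistedMatrix

variable {F : Type*} [Field F] {q : ℕ} {ι : Type*} [Fintype ι]

lemma twMatMul_apply (A B : Matrix ι ι F[X]) (a b : ι) :
    twMatMul q A B a b = ∑ k, twMul q (A a k) (B k b) := rfl

lemma add_twMatMul (A B C : Matrix ι ι F[X]) :
    twMatMul q (A + B) C = twMatMul q A C + twMatMul q B C :=
  Matrix.ext fun a b => by simp [twMatMul_apply, add_twMul, Finset.sum_add_distrib]

lemma map_twMatMul {F' : Type*} [Field F'] (φ : F →+* F') (A B : Matrix ι ι F[X]) :
    (twMatMul q A B).map (Polynomial.map φ) =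
      twMatMul q (A.map (Polynomial.map φ)) (B.map (Polynomial.map φ)) :=
  Matrix.ext fun a b => by simp [twMatMul_apply, Polynomial.map_sum, map_twMul]

section DecidableEq

variable [DecidableEq ι]

lemma one_twMatMul (A : Matrix ι ι F[X]) : twMatMul q 1 A = A :=
  Matrix.ext fun a b => by
    rw [twMatMul_apply, Finset.sum_eq_single a (fun k _ hk => by rw [one_apply_ne' hk, zero_twMul])
      (by simp), one_apply_eq, one_twMul]

lemma twMatMul_one (hq : q ≠ 0) (A : Matrix ι ι F[X]) : twMatMul q A 1 = A :=
  Matrix.ext fun a b => by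
    rw [twMatMul_apply, Finset.sum_eq_single b (fun k _ hk => by rw [one_apply_ne hk, twMul_zero])
      (by simp), one_apply_eq, twMul_one hq]

lemma single_twMatMul_apply (i j : ι) (e : F[X]) (A : Matrix ι ι F[X]) (a b : ι) :
    twMatMul q (single i j e) A a b = if a = i then twMul q e (A j b) else 0 := by
  split_ifs with ha
  · subst ha
    rw [twMatMul_apply, Finset.sum_eq_single j
      (fun k _ hk => by rw [Matrix.single_apply_of_col_ne _ _ (Ne.symm hk), zero_twMul]) (by simp),
      Matrix.single_apply_same]
  · exact Finset.sum_eq_zero fun k _ => by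
      rw [Matrix.single_apply_of_row_ne (Ne.symm ha), zero_twMul]

lemma twMatMul_single_apply (i j : ι) (e : F[X]) (A : Matrix ι ι F[X]) (a b : ι) :
    twMatMul q A (single i j e) a b = if b = j then twMul q (A a i) e else 0 := by
  split_ifs with hb
  · subst hb
    rw [twMatMul_apply, Finset.sum_eq_single i
      (fun k _ hk => by rw [Matrix.single_apply_of_row_ne (Ne.symm hk), twMul_zero]) (by simp),
      Matrix.single_apply_same]
  · exact Finset.sum_eq_zero fun k _ => by
      rw [Matrix.single_apply_of_col_ne _ _ (Ne.symm hb), twMul_zero]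

end DecidableEq

section LinearOrder

variable [LinearOrder ι]

lemma Matrix.IsLowerTriangular.twMatMul {A B : Matrix ι ι F[X]} (hA : A.IsLowerTriangular)
    (hB : B.IsLowerTriangular) : (twMatMul q A B).IsLowerTriangular := by
  intro a b (hab : a < b)
  refine Finset.sum_eq_zero fun k _ => ?_
  rcases lt_or_ge a k with hak | hka
  · rw [hA (show a < k from hak), zero_twMul]
  · rw [hB (show k < b from hka.trans_lt hab), twMul_zero]

lemma twMatMul_apply_self {A B : Matrix ι ι F[X]} (hA : A.IsLowerTriangular)
    (hB : B.IsLowerTriangular) (k : ι) : twMatMul q A B k k = twMul q (A k k) (B k k) := by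
  refine Finset.sum_eq_single k (fun b _ hbk => ?_) (by simp)
  rcases lt_or_gt_of_ne hbk with h | h
  · rw [hB (show b < k from h), twMul_zero]
  · rw [hA (show k < b from h), zero_twMul]

end LinearOrder

variable {p s : ℕ} [ExpChar F p]

lemma twMatMul_add (A B C : Matrix ι ι F[X]) :
    twMatMul (p ^ s) A (B + C) = twMatMul (p ^ s) A B + twMatMul (p ^ s) A C :=
  Matrix.ext fun a b => by simp [twMatMul_apply, twMul_add, Finset.sum_add_distrib]

lemma twMatMul_assoc (A B C : Matrix ι ι F[X]) :
    twMatMul (p ^ s) (twMatMul (p ^ s) A B) C = twMatMul (p ^ s) A (twMatMul (p ^ s) B C) :=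
  Matrix.ext fun a b => by
    simp only [twMatMul_apply, sum_twMul, twMul_sum, twMul_assoc]
    exact Finset.sum_comm

end TwistedMatrix

section Conjugation

variable {F : Type*} [Field F] {ι : Type*} [LinearOrder ι] {r : ℕ}

def IsAlmostStrictlyPure (r : ℕ) (Υ : Matrix ι ι F[X]) : Prop :=
  Υ.IsLowerTriangular ∧ ∀ k, (Υ k k).natDegree = r ∧ (Υ k k).coeff r ≠ 0

lemma IsAlmostStrictlyPure.map {F' : Type*} [Field F'] (φ : F →+* F')
    {Υ : Matrix ι ι F[X]} (hΥ : IsAlmostStrictlyPure r Υ) :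
    IsAlmostStrictlyPure r (Υ.map (Polynomial.map φ)) :=
  ⟨fun a b h => by simp [hΥ.1 h], fun k => by
    simpa [natDegree_map, coeff_map] using hΥ.2 k⟩

lemma IsAlmostStrictlyPure.natDegree_le_of_le {Υ : Matrix ι ι F[X]}
    (hΥ : IsAlmostStrictlyPure r Υ) {a b : ι} (hab : a ≤ b) : (Υ a b).natDegree ≤ r := by
  rcases hab.lt_or_eq with hab | rfl
  · simp [hΥ.1 (show a < b from hab)]
  · exact (hΥ.2 a).1.le

variable [Fintype ι]

structure IsUnitriConjBy (q : ℕ) (V W Υ Υ' : Matrix ι ι F[X]) : Prop where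
  isLowerTriangular_left : V.IsLowerTriangular
  left_apply_self : ∀ k, V k k = 1
  isLowerTriangular_right : W.IsLowerTriangular
  right_apply_self : ∀ k, W k k = 1
  left_twMatMul_right : twMatMul q V W = 1
  right_twMatMul_left : twMatMul q W V = 1
  eq_twMatMul : Υ' = twMatMul q (twMatMul q V Υ) W

def IsUnitriConj (q : ℕ) (Υ Υ' : Matrix ι ι F[X]) : Prop :=
  ∃ V W, IsUnitriConjBy q V W Υ Υ'

lemma IsUnitriConjBy.of_map {F' : Type*} [Field F'] {φ : F →+* F'} {q : ℕ}
    {V W Υ Υ' : Matrix ι ι F[X]}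
    (h : IsUnitriConjBy q (V.map (Polynomial.map φ)) (W.map (Polynomial.map φ))
      (Υ.map (Polynomial.map φ)) (Υ'.map (Polynomial.map φ))) :
    IsUnitriConjBy q V W Υ Υ' := by
  have hinj : Function.Injective fun M : Matrix ι ι F[X] => M.map (Polynomial.map φ) :=
    Matrix.map_injective (Polynomial.map_injective φ φ.injective)
  have hone : (1 : Matrix ι ι F[X]).map (Polynomial.map φ) = 1 :=
    Matrix.map_one _ (Polynomial.map_zero φ) (Polynomial.map_one φ)
  refine ⟨fun a b hab => ?_, fun k => ?_, fun a b hab => ?_, fun k => ?_, hinj ?_, hinj ?_,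
    hinj ?_⟩
  · exact Polynomial.map_injective φ φ.injective (by simpa using h.isLowerTriangular_left hab)
  · exact Polynomial.map_injective φ φ.injective (by simpa using h.left_apply_self k)
  · exact Polynomial.map_injective φ φ.injective (by simpa using h.isLowerTriangular_right hab)
  · exact Polynomial.map_injective φ φ.injective (by simpa using h.right_apply_self k)
  · simpa [map_twMatMul, hone] using h.left_twMatMul_right
  · simpa [map_twMatMul, hone] using h.right_twMatMul_left
  · simpa [map_twMatMul] using h.eq_twMatMul

lemma IsUnitriConj.isLowerTriangular {q : ℕ} {Υ Υ' : Matrix ι ι F[X]} (h : IsUnitriConj q Υ Υ')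
    (hΥ : Υ.IsLowerTriangular) : Υ'.IsLowerTriangular := by
  obtain ⟨V, W, h⟩ := h
  rw [h.eq_twMatMul]
  exact IsLowerTriangular.twMatMul (IsLowerTriangular.twMatMul h.isLowerTriangular_left hΥ)
    h.isLowerTriangular_right

lemma IsUnitriConj.apply_self {q : ℕ} {Υ Υ' : Matrix ι ι F[X]} (h : IsUnitriConj q Υ Υ')
    (hq : q ≠ 0) (hΥ : Υ.IsLowerTriangular) (k : ι) : Υ' k k = Υ k k := by
  obtain ⟨V, W, h⟩ := h
  rw [h.eq_twMatMul, twMatMul_apply_self (IsLowerTriangular.twMatMul h.isLowerTriangular_left hΥ)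
      h.isLowerTriangular_right, twMatMul_apply_self h.isLowerTriangular_left hΥ,
    h.left_apply_self, h.right_apply_self, one_twMul, twMul_one hq]

variable {p s : ℕ} [ExpChar F p]

namespace IsUnitriConj

lemma refl (Υ : Matrix ι ι F[X]) : IsUnitriConj (p ^ s) Υ Υ := by
  have hq : p ^ s ≠ 0 := pow_ne_zero s (expChar_ne_zero F p)
  exact ⟨1, 1, ⟨fun a b h => one_apply_ne (ne_of_lt h), one_apply_eq, fun a b h =>
    one_apply_ne (ne_of_lt h), one_apply_eq, twMatMul_one hq 1, twMatMul_one hq 1,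
    by rw [one_twMatMul, twMatMul_one hq]⟩⟩

lemma trans {Υ₁ Υ₂ Υ₃ : Matrix ι ι F[X]} (h₁₂ : IsUnitriConj (p ^ s) Υ₁ Υ₂)
    (h₂₃ : IsUnitriConj (p ^ s) Υ₂ Υ₃) : IsUnitriConj (p ^ s) Υ₁ Υ₃ := by
  obtain ⟨V₁, W₁, h₁⟩ := h₁₂
  obtain ⟨V₂, W₂, h₂⟩ := h₂₃
  refine ⟨twMatMul (p ^ s) V₂ V₁, twMatMul (p ^ s) W₁ W₂,
    ⟨IsLowerTriangular.twMatMul h₂.isLowerTriangular_left h₁.isLowerTriangular_left, fun k => ?_,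
      IsLowerTriangular.twMatMul h₁.isLowerTriangular_right h₂.isLowerTriangular_right,
      fun k => ?_, ?_, ?_, ?_⟩⟩
  · rw [twMatMul_apply_self h₂.isLowerTriangular_left h₁.isLowerTriangular_left,
      h₂.left_apply_self, h₁.left_apply_self, one_twMul]
  · rw [twMatMul_apply_self h₁.isLowerTriangular_right h₂.isLowerTriangular_right,
      h₁.right_apply_self, h₂.right_apply_self, one_twMul]
  · rw [twMatMul_assoc, ← twMatMul_assoc V₁, h₁.left_twMatMul_right, one_twMatMul,
      h₂.left_twMatMul_right]
  · rw [twMatMul_assoc, ← twMatMul_assoc W₂, h₂.right_twMatMul_left, one_twMatMul,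
      h₁.right_twMatMul_left]
  · simp only [h₂.eq_twMatMul, h₁.eq_twMatMul, twMatMul_assoc]

lemma isAlmostStrictlyPure {Υ Υ' : Matrix ι ι F[X]} (h : IsUnitriConj (p ^ s) Υ Υ')
    (hΥ : IsAlmostStrictlyPure r Υ) : IsAlmostStrictlyPure r Υ' :=
  ⟨h.isLowerTriangular hΥ.1,
    fun k => h.apply_self (pow_ne_zero s (expChar_ne_zero F p)) hΥ.1 k ▸ hΥ.2 k⟩

end IsUnitriConj

lemma isUnitriConj_one_add_single {i j : ι} (hji : j < i) {Υ : Matrix ι ι F[X]}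
    (hΥ : Υ.IsLowerTriangular) (e : F[X]) :
    IsUnitriConj (p ^ s) Υ
      (Υ + twMatMul (p ^ s) (single i j e) Υ + twMatMul (p ^ s) Υ (single i j (-e))) := by
  have hq : p ^ s ≠ 0 := pow_ne_zero s (expChar_ne_zero F p)
  have hlower (e : F[X]) : (1 + single i j e : Matrix ι ι F[X]).IsLowerTriangular :=
    fun a b (hab : a < b) => by
    rw [Matrix.add_apply, one_apply_ne hab.ne, zero_add, Matrix.single_apply, if_neg]
    rintro ⟨rfl, rfl⟩
    exact hab.not_gt hji
  have hdiag (e : F[X]) (k : ι) : (1 + single i j e : Matrix ι ι F[X]) k k = 1 := by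
    rw [Matrix.add_apply, one_apply_eq, add_eq_left, Matrix.single_apply, if_neg]
    rintro ⟨rfl, rfl⟩
    exact hji.false
  have hsq (x y : F[X]) :
      twMatMul (p ^ s) (single i j x) (single i j y : Matrix ι ι F[X]) = 0 :=
    Matrix.ext fun a b => by
      rw [single_twMatMul_apply, Matrix.zero_apply, Matrix.single_apply_of_row_ne hji.ne',
        twMul_zero, ite_self]
  have hinv (x y : F[X]) (hxy : x + y = 0) :
      twMatMul (p ^ s) (1 + single i j x) (1 + single i j y : Matrix ι ι F[X]) = 1 := by
    rw [twMatMul_add, add_twMatMul, add_twMatMul, twMatMul_one hq, twMatMul_one hq, one_twMatMul,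
      hsq, add_zero, add_assoc, ← Matrix.single_add, hxy, Matrix.single_zero, add_zero]
  have hEΥE : twMatMul (p ^ s) (twMatMul (p ^ s) (single i j e) Υ) (single i j (-e)) = 0 :=
    Matrix.ext fun a b => by
      rw [twMatMul_single_apply, single_twMatMul_apply, hΥ (show j < i from hji), twMul_zero,
        ite_self, zero_twMul, ite_self, Matrix.zero_apply]
  refine ⟨1 + single i j e, 1 + single i j (-e), ⟨hlower e, hdiag e, hlower (-e), hdiag (-e),
    hinv _ _ (add_neg_cancel e), hinv _ _ (neg_add_cancel e), ?_⟩⟩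
  rw [add_twMatMul, one_twMatMul, twMatMul_add, twMatMul_one hq, add_twMatMul, hEΥE, add_zero]

end Conjugation

section Reduction

variable {F : Type*} [Field F] {r n : ℕ}

/-- The entries already treated when the entries are reduced row by row from the top, each row
from right to left. -/
def DegreeBoundedBefore (r i j : ℕ) (Υ : Matrix (Fin n) (Fin n) F[X]) : Prop :=
  ∀ a b : Fin n, (a : ℕ) < i ∨ ((a : ℕ) = i ∧ j ≤ b) → (Υ a b).natDegree ≤ r

lemma DegreeBoundedBefore.succ_row {Υ : Matrix (Fin n) (Fin n) F[X]} {i : ℕ}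
    (h : DegreeBoundedBefore r i 0 Υ) : DegreeBoundedBefore r (i + 1) n Υ :=
  fun a b hab => h a b (by omega)

variable [IsAlgClosed F] {p s : ℕ} [ExpChar F p]

lemma IsAlmostStrictlyPure.exists_isUnitriConj_natDegree_apply_le {ι : Type*} [Fintype ι]
    [LinearOrder ι] (hq : 1 < p ^ s) (hr : 1 ≤ r) {Υ : Matrix ι ι F[X]}
    (hΥ : IsAlmostStrictlyPure r Υ) {i j : ι} (hji : j < i) :
    ∃ Υ', IsUnitriConj (p ^ s) Υ Υ' ∧ (Υ' i j).natDegree ≤ r ∧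
      ∀ a b, a < i ∨ (a = i ∧ j < b) → Υ' a b = Υ a b := by
  obtain ⟨e, he⟩ := exists_natDegree_add_twMul_sub_twMul_le hq hr (hΥ.2 i).1.le (hΥ.2 j).1.le
    (hΥ.2 i).2 (Υ i j)
  refine ⟨_, isUnitriConj_one_add_single hji hΥ.1 e, ?_, fun a b hab => ?_⟩
  · rwa [Matrix.add_apply, Matrix.add_apply, single_twMatMul_apply, twMatMul_single_apply,
      if_pos rfl, if_pos rfl, twMul_neg, ← sub_eq_add_neg]
  simp only [Matrix.add_apply, single_twMatMul_apply, twMatMul_single_apply]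
  rcases hab with hai | ⟨rfl, hjb⟩
  · simp [hai.ne, hΥ.1 (show a < i from hai)]
  · simp [hjb.ne', hΥ.1 (show j < b from hjb)]

lemma IsAlmostStrictlyPure.exists_isUnitriConj_degreeBoundedBefore (hq : 1 < p ^ s)
    (hr : 1 ≤ r) {Υ : Matrix (Fin n) (Fin n) F[X]} (hΥ : IsAlmostStrictlyPure r Υ) {i j : ℕ}
    (h : DegreeBoundedBefore r i (j + 1) Υ) :
    ∃ Υ', IsUnitriConj (p ^ s) Υ Υ' ∧ DegreeBoundedBefore r i j Υ' := by
  by_cases hij : j < i ∧ i < n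
  · obtain ⟨Υ', hconj, hij', hrest⟩ := hΥ.exists_isUnitriConj_natDegree_apply_le hq hr
      (i := ⟨i, hij.2⟩) (j := ⟨j, hij.1.trans hij.2⟩) (Fin.mk_lt_mk.2 hij.1)
    refine ⟨Υ', hconj, fun a b hab => ?_⟩
    by_cases hab' : (a : ℕ) = i ∧ (b : ℕ) = j
    · obtain ⟨rfl, rfl⟩ : a = ⟨i, hij.2⟩ ∧ b = ⟨j, hij.1.trans hij.2⟩ :=
        ⟨Fin.ext hab'.1, Fin.ext hab'.2⟩
      exact hij'
    rw [hrest a b (by simp only [Fin.ext_iff, Fin.lt_def]; omega)]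
    exact h a b (by omega)
  · refine ⟨Υ, .refl Υ, fun a b hab => ?_⟩
    by_cases hab' : (a : ℕ) = i ∧ (b : ℕ) = j
    · exact hΥ.natDegree_le_of_le (Fin.le_def.2 (by omega))
    · exact h a b (by omega)

lemma IsAlmostStrictlyPure.exists_isUnitriConj_degreeBoundedBefore_zero (hq : 1 < p ^ s)
    (hr : 1 ≤ r) {i : ℕ} (j : ℕ) {Υ : Matrix (Fin n) (Fin n) F[X]}
    (hΥ : IsAlmostStrictlyPure r Υ) (h : DegreeBoundedBefore r i j Υ) :
    ∃ Υ', IsUnitriConj (p ^ s) Υ Υ' ∧ DegreeBoundedBefore r i 0 Υ' := by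
  induction j generalizing Υ with
  | zero => exact ⟨Υ, .refl Υ, h⟩
  | succ j ih =>
    obtain ⟨Υ₁, h₁, hbd₁⟩ := hΥ.exists_isUnitriConj_degreeBoundedBefore hq hr h
    obtain ⟨Υ₂, h₂, hbd₂⟩ := ih (h₁.isAlmostStrictlyPure hΥ) hbd₁
    exact ⟨Υ₂, h₁.trans h₂, hbd₂⟩

theorem IsAlmostStrictlyPure.exists_isUnitriConj_natDegree_le (hq : 1 < p ^ s) (hr : 1 ≤ r)
    {Υ : Matrix (Fin n) (Fin n) F[X]} (hΥ : IsAlmostStrictlyPure r Υ) :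
    ∃ Υ', IsUnitriConj (p ^ s) Υ Υ' ∧ ∀ a b, (Υ' a b).natDegree ≤ r := by
  suffices ∀ i, ∃ Υ', IsUnitriConj (p ^ s) Υ Υ' ∧ DegreeBoundedBefore r i 0 Υ' by
    obtain ⟨Υ', hconj, hbd⟩ := this n
    exact ⟨Υ', hconj, fun a b => hbd a b (.inl a.2)⟩
  intro i
  induction i with
  | zero => exact hΥ.exists_isUnitriConj_degreeBoundedBefore_zero hq hr n fun a b hab => by omega
  | succ i ih =>
    obtain ⟨Υ₁, h₁, hbd₁⟩ := ih
    obtain ⟨Υ₂, h₂, hbd₂⟩ :=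
      (h₁.isAlmostStrictlyPure hΥ).exists_isUnitriConj_degreeBoundedBefore_zero hq hr n
        hbd₁.succ_row
    exact ⟨Υ₂, h₁.trans h₂, hbd₂⟩

end Reduction

section StrictlyPure

variable {F : Type*} [Field F] {ι : Type*} [Fintype ι] [LinearOrder ι] {r : ℕ}
  {Υ : Matrix ι ι F[X]}

lemma IsAlmostStrictlyPure.sup_natDegree_eq [Nonempty ι] (hΥ : IsAlmostStrictlyPure r Υ)
    (hle : ∀ a b, (Υ a b).natDegree ≤ r) :
    (Finset.univ.sup fun ab : ι × ι => (Υ ab.1 ab.2).natDegree) = r := by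
  obtain ⟨k⟩ := ‹Nonempty ι›
  refine le_antisymm (Finset.sup_le fun ab _ => hle ab.1 ab.2) ?_
  exact (hΥ.2 k).1 ▸ Finset.le_sup (f := fun ab : ι × ι => (Υ ab.1 ab.2).natDegree)
    (Finset.mem_univ (k, k))

lemma IsAlmostStrictlyPure.isUnit_coeff (hΥ : IsAlmostStrictlyPure r Υ) :
    IsUnit (Matrix.of fun a b : ι => (Υ a b).coeff r) := by
  have hlower : (Matrix.of fun a b : ι => (Υ a b).coeff r).IsLowerTriangular :=
    fun a b hab => by simp [hΥ.1 hab]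
  rw [isUnit_iff_isUnit_det, det_of_isLowerTriangular _ hlower]
  exact isUnit_iff_ne_zero.2 (Finset.prod_ne_zero_iff.2 fun k _ => (hΥ.2 k).2)

end StrictlyPure

section Descent

variable {K E : Type*} [Field K] [Field E] [Algebra K E] {ι : Type*}

lemma exists_finiteDimensional_coeff_mem [Algebra.IsAlgebraic K E] (S : Finset E[X]) :
    ∃ L : IntermediateField K E, FiniteDimensional K L ∧ ∀ f ∈ S, ∀ k, f.coeff k ∈ L := by
  classical
  refine ⟨IntermediateField.adjoin K (S.biUnion coeffs : Set E),
    IntermediateField.finiteDimensional_adjoin fun x _ =>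
      (Algebra.IsAlgebraic.isAlgebraic x).isIntegral, fun f hf k => ?_⟩
  by_cases h0 : f.coeff k = 0
  · exact h0 ▸ zero_mem _
  · exact IntermediateField.subset_adjoin _ _ (Finset.mem_biUnion.2 ⟨f, hf, coeff_mem_coeffs h0⟩)

lemma exists_map_eq_of_coeff_mem {L : IntermediateField K E} (M : Matrix ι ι E[X])
    (h : ∀ a b k, (M a b).coeff k ∈ L) :
    ∃ M' : Matrix ι ι L[X], M'.map (Polynomial.map (algebraMap L E)) = M := by
  have hlifts (a b : ι) : M a b ∈ lifts (algebraMap L E) :=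
    (lifts_iff_coeff_lifts (M a b)).2 fun k => ⟨⟨_, h a b k⟩, rfl⟩
  choose M' hM' using fun a b => (mem_lifts (M a b)).1 (hlifts a b)
  exact ⟨Matrix.of M', Matrix.ext hM'⟩

lemma IsUnitriConj.exists_intermediateField [Fintype ι] [LinearOrder ι] [Algebra.IsAlgebraic K E]
    {q : ℕ} {Υ : Matrix ι ι K[X]} {Υ' : Matrix ι ι E[X]}
    (h : IsUnitriConj q (Υ.map (Polynomial.map (algebraMap K E))) Υ') :
    ∃ L : IntermediateField K E, FiniteDimensional K L ∧ ∃ ΥL : Matrix ι ι L[X],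
      IsUnitriConj q (Υ.map (Polynomial.map (algebraMap K L))) ΥL ∧
      ΥL.map (Polynomial.map (algebraMap L E)) = Υ' := by
  classical
  obtain ⟨V, W, h⟩ := h
  let entries (M : Matrix ι ι E[X]) : Finset E[X] :=
    Finset.univ.image fun ab : ι × ι => M ab.1 ab.2
  obtain ⟨L, hL, hmem⟩ :=
    exists_finiteDimensional_coeff_mem (K := K) (entries V ∪ entries W ∪ entries Υ')
  have hentries (M : Matrix ι ι E[X]) (a b : ι) : M a b ∈ entries M :=
    Finset.mem_image_of_mem _ (Finset.mem_univ (a, b))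
  obtain ⟨VL, rfl⟩ := exists_map_eq_of_coeff_mem V fun a b =>
    hmem _ (Finset.mem_union_left _ (Finset.mem_union_left _ (hentries V a b)))
  obtain ⟨WL, rfl⟩ := exists_map_eq_of_coeff_mem W fun a b =>
    hmem _ (Finset.mem_union_left _ (Finset.mem_union_right _ (hentries W a b)))
  obtain ⟨ΥL, rfl⟩ := exists_map_eq_of_coeff_mem Υ' fun a b =>
    hmem _ (Finset.mem_union_right _ (hentries Υ' a b))
  have hΥ : (Υ.map (Polynomial.map (algebraMap K L))).map (Polynomial.map (algebraMap L E)) =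
      Υ.map (Polynomial.map (algebraMap K E)) := by
    rw [Matrix.map_map]
    congr 1
    funext f
    rw [Function.comp_apply, Polynomial.map_map, ← IsScalarTower.algebraMap_eq]
  exact ⟨L, hL, ΥL, ⟨VL, WL, IsUnitriConjBy.of_map (hΥ ▸ h)⟩, rfl⟩

end Descent

lemma IsTriangular.isAlmostStrictlyPure {K : Type*} [Field K] {θ : K} {n : ℕ}
    {Υ : Matrix (Fin n) (Fin n) K[X]} {ψ : Fin n → K[X]} {r : Fin n → ℕ} {r₀ : ℕ}
    (hΥ : IsTriangular θ Υ ψ r) (hr : ∀ i, r i = r₀) : IsAlmostStrictlyPure r₀ Υ :=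
  ⟨fun _ _ h => hΥ.1 _ _ h, fun k => by
    obtain ⟨-, -, hdeg, hlead⟩ := hΥ.2.2 k.rev
    rw [hΥ.2.1, ← hr k.rev]
    exact ⟨hdeg, hlead⟩⟩

/-- an almost strictly pure triangular t-module becomes strictly pure
after a finite base extension.  If all diagonal Drinfeld modules of `Υ` have the same
rank `r₀`, then there exist a finite field extension `L/K` and a lower triangular matrix
`V` over `L{τ}` with diagonal entries `1` (with two-sided twisted inverse `W`) such that
`V·Υ_t·V⁻¹` is lower triangular with the same diagonal entries, has `τ`-degree `r₀`, and
its leading coefficient matrix (the entrywise matrix of coefficients of `τ^{r₀}`) is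
invertible; i.e. `Υ` becomes isomorphic over `L` to a strictly pure t-module. -/
theorem almost_strictly_pure_becomes_strictly_pure
    {K : Type*} [Field K] (p s q : ℕ) [Fact p.Prime] (hs : 0 < s) (hq : q = p ^ s)
    [Algebra (GaloisField p s) K] (θ : K) {n : ℕ} (hn : 0 < n)
    (Υ : Matrix (Fin n) (Fin n) (Polynomial K))
    (ψ : Fin n → Polynomial K) (r : Fin n → ℕ)
    (hΥ : IsTriangular θ Υ ψ r)
    (r₀ : ℕ) (hr : ∀ i : Fin n, r i = r₀) :
    ∃ L : IntermediateField K (AlgebraicClosure K), FiniteDimensional K L ∧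
      ∃ V W : Matrix (Fin n) (Fin n) (Polynomial L),
        (∀ i j : Fin n, i < j → V i j = 0) ∧
        (∀ k : Fin n, V k k = 1) ∧
        twMatMul q V W = 1 ∧ twMatMul q W V = 1 ∧
        ∃ Υ' : Matrix (Fin n) (Fin n) (Polynomial L),
          Υ' = twMatMul q (twMatMul q V (Υ.map (Polynomial.map (algebraMap K L)))) W ∧
          (∀ i j : Fin n, i < j → Υ' i j = 0) ∧
          (∀ k : Fin n, Υ' k k = (ψ k.rev).map (algebraMap K L)) ∧
          (Finset.univ.sup fun ab : Fin n × Fin n => (Υ' ab.1 ab.2).natDegree) = r₀ ∧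
          IsUnit (Matrix.of fun a b : Fin n => (Υ' a b).coeff r₀) := by
  subst hq
  have : CharP K p := charP_of_injective_algebraMap (algebraMap (GaloisField p s) K).injective p
  have : Nonempty (Fin n) := ⟨⟨0, hn⟩⟩
  have hq : 1 < p ^ s := Nat.one_lt_pow hs.ne' (Fact.out : p.Prime).one_lt
  have hr₀ : 1 ≤ r₀ := hr ⟨0, hn⟩ ▸ (hΥ.2.2 ⟨0, hn⟩).1
  have hpure := hΥ.isAlmostStrictlyPure hr
  obtain ⟨Υ', hconj, hdeg⟩ :=
    (hpure.map (algebraMap K (AlgebraicClosure K))).exists_isUnitriConj_natDegree_le hq hr₀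
  obtain ⟨L, hL, ΥL, hconjL, rfl⟩ := hconj.exists_intermediateField
  have hpureL := hconjL.isAlmostStrictlyPure (hpure.map (algebraMap K L))
  have hdiag := hconjL.apply_self (by omega) (hpure.map (algebraMap K L)).1
  have hdegL (a b : Fin n) : (ΥL a b).natDegree ≤ r₀ := by
    simpa [natDegree_map] using hdeg a b
  obtain ⟨V, W, hVW⟩ := hconjL
  refine ⟨L, hL, V, W, fun i j h => hVW.isLowerTriangular_left h, hVW.left_apply_self,
    hVW.left_twMatMul_right, hVW.right_twMatMul_left, ΥL, hVW.eq_twMatMul,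
    fun i j h => hpureL.1 h, fun k => ?_, hpureL.sup_natDegree_eq hdegL, hpureL.isUnit_coeff⟩
  rw [hdiag, Matrix.map_apply, hΥ.2.1]
end
end

section
/- Let K be an A-field and let Υ, Υ̂ be triangular t-modules of the same dimension n over K, with diagonal Drinfeld modules ψ_1,…,ψ_n and ψ̂_1,…,ψ̂_n. Let U ∈ Mat_n(K{τ}) be a triangular morphism Υ → Υ̂, i.e. U is lower triangular and U·Υ_t = Υ̂_t·U. Then: (i) each diagonal entry u_k := U_{k,k} satisfies u_k·ψ_{n+1−k,t} = ψ̂_{n+1−k,t}·u_k (it is a morphism of Drinfeld modules); and (ii) if K has A-characteristic zero and all constant terms of the entries of U vanish (∂U = 0), then U = 0. In particular, in A-characteristic zero the 𝔽_q-linear map U ↦ ∂U from the space of triangular morphisms Υ → Υ̂ to Mat_n(K) is injective. -/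
/-!
As `Υ_t` and `Υ̂_t` are lower triangular, the `(a, b)` entry of `U Υ_t = Υ̂_t U` reduces to
`U_ab ψ = ψ̂ U_ab`, with `ψ`, `ψ̂` the diagonal entries at `b` and `a`, as soon as the entries of
`U` to the right of `(a, b)` and above it vanish; on the diagonal this holds by triangularity
of `U`. If `u ψ = ψ̂ u` with `∂ψ = ∂ψ̂ = θ` and `u ≠ 0` has trailing term `u_m τ^m`, comparing
coefficients of `τ^m` gives `θ^(q^m) = θ`; if moreover `∂u = 0`, then `m ≥ 1` and `θ` is
algebraic over `𝔽_q`. So in `A`-characteristic zero `∂U = 0` forces `U = 0`, entry by entry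
from the diagonal downwards, and `U ↦ ∂U` is injective by linearity.
-/

open Polynomial Matrix Finset

noncomputable section

section TwistedPolynomial

variable {K : Type*} [Field K] {q : ℕ}

lemma coeff_twMul (hq : q ≠ 0) (f g : K[X]) (m : ℕ) :
    (twMul q f g).coeff m = ∑ ij ∈ antidiagonal m, f.coeff ij.1 * g.coeff ij.2 ^ q ^ ij.1 := by
  classical
  simp only [twMul, Polynomial.sum_def, finsetSum_coeff, coeff_C_mul, coeff_X_pow, mul_ite,
    mul_one, mul_zero]
  rw [← sum_product', ← sum_filter]
  apply sum_subset
  · intro x hx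
    simp only [mem_filter] at hx
    simp [HasAntidiagonal.mem_antidiagonal, hx.2.symm]
  · intro x hx hnx
    simp only [HasAntidiagonal.mem_antidiagonal] at hx
    simp only [mem_filter, mem_product, mem_support_iff, not_and] at hnx
    by_cases hf : f.coeff x.1 = 0
    · simp [hf]
    by_cases hg : g.coeff x.2 = 0
    · simp [hg, zero_pow (pow_ne_zero x.1 hq)]
    · exact absurd hx.symm (hnx ⟨hf, hg⟩)

@[simp]
lemma twMul_zero_left (g : K[X]) : twMul q 0 g = 0 := by
  simp [twMul]

@[simp]
lemma twMul_zero_right (f : K[X]) : twMul q f 0 = 0 := by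
  simp [twMul, Polynomial.sum_def]

lemma twMul_sub_left (hq : q ≠ 0) (f f' g : K[X]) :
    twMul q (f - f') g = twMul q f g - twMul q f' g := by
  ext m
  simp [coeff_twMul hq, sub_mul, sum_sub_distrib]

/-- Right distributivity needs `b ↦ b ^ q ^ i` to be additive, i.e. `q` a power of the
characteristic. -/
lemma twMul_sub_right (p : ℕ) [Fact p.Prime] [CharP K p] {s : ℕ} (hq : q = p ^ s)
    (f g g' : K[X]) : twMul q f (g - g') = twMul q f g - twMul q f g' := by
  have hq0 : q ≠ 0 := hq ▸ pow_ne_zero s (Fact.out : p.Prime).ne_zero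
  ext m
  simp only [coeff_twMul hq0, coeff_sub, ← sum_sub_distrib, ← mul_sub]
  simp only [hq, ← pow_mul, sub_pow_char_pow]

lemma coeff_natTrailingDegree_twMul_left (hq : q ≠ 0) (u ψ : K[X]) :
    (twMul q u ψ).coeff u.natTrailingDegree =
      u.trailingCoeff * ψ.coeff 0 ^ q ^ u.natTrailingDegree := by
  rw [coeff_twMul hq, sum_eq_single_of_mem (u.natTrailingDegree, 0) (by simp)]
  · rfl
  · rintro ⟨i, j⟩ hij hne
    simp only [HasAntidiagonal.mem_antidiagonal] at hij
    rw [coeff_eq_zero_of_lt_natTrailingDegree (p := u) (n := i) (by grind), zero_mul]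

lemma coeff_natTrailingDegree_twMul_right (hq : q ≠ 0) (ψ u : K[X]) :
    (twMul q ψ u).coeff u.natTrailingDegree = ψ.coeff 0 * u.trailingCoeff := by
  rw [coeff_twMul hq, sum_eq_single_of_mem (0, u.natTrailingDegree) (by simp)]
  · simp [trailingCoeff]
  · rintro ⟨i, j⟩ hij hne
    simp only [HasAntidiagonal.mem_antidiagonal] at hij
    rw [coeff_eq_zero_of_lt_natTrailingDegree (p := u) (n := j) (by grind),
      zero_pow (pow_ne_zero _ hq), mul_zero]

lemma pow_pow_natTrailingDegree_eq_of_twMul_eq (hq : q ≠ 0) {θ : K} {u ψ ψ' : K[X]}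
    (hψ : ψ.coeff 0 = θ) (hψ' : ψ'.coeff 0 = θ) (hu : u ≠ 0)
    (h : twMul q u ψ = twMul q ψ' u) : θ ^ q ^ u.natTrailingDegree = θ := by
  have hm := congrArg (coeff · u.natTrailingDegree) h
  simp only [coeff_natTrailingDegree_twMul_left hq, coeff_natTrailingDegree_twMul_right hq,
    hψ, hψ', mul_comm θ] at hm
  exact mul_left_cancel₀ (trailingCoeff_nonzero_iff_nonzero.mpr hu) hm

lemma isAlgebraic_of_pow_eq_self (F : Type*) [Field F] [Algebra F K] {x : K} {N : ℕ}
    (hN : 1 < N) (h : x ^ N = x) : IsAlgebraic F x :=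
  ⟨X ^ N - X, FiniteField.X_pow_card_sub_X_ne_zero F hN, by simp [h]⟩

lemma eq_zero_of_twMul_eq_of_coeff_zero (F : Type*) [Field F] [Algebra F K] (hq : 1 < q)
    {θ : K} (hθ : Transcendental F θ) {u ψ ψ' : K[X]}
    (hψ : ψ.coeff 0 = θ) (hψ' : ψ'.coeff 0 = θ)
    (h : twMul q u ψ = twMul q ψ' u) (hu0 : u.coeff 0 = 0) : u = 0 := by
  by_contra hu
  have hm : u.natTrailingDegree ≠ 0 := by simp [hu, hu0]
  exact hθ <| isAlgebraic_of_pow_eq_self F (Nat.one_lt_pow hm hq)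
    (pow_pow_natTrailingDegree_eq_of_twMul_eq (by omega) hψ hψ' hu h)

end TwistedPolynomial

section TriangularMatrix

variable {K : Type*} [Field K] {q n : ℕ}

lemma twMatMul_sub_left (hq : q ≠ 0) (A A' B : Matrix (Fin n) (Fin n) K[X]) :
    twMatMul q (A - A') B = twMatMul q A B - twMatMul q A' B := by
  ext i k
  simp [twMatMul, twMul_sub_left hq]

lemma twMatMul_sub_right (p : ℕ) [Fact p.Prime] [CharP K p] {s : ℕ} (hq : q = p ^ s)
    (A B B' : Matrix (Fin n) (Fin n) K[X]) :
    twMatMul q A (B - B') = twMatMul q A B - twMatMul q A B' := by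
  ext i k
  simp [twMatMul, twMul_sub_right p hq]

lemma twMatMul_apply_of_lower_right {A B : Matrix (Fin n) (Fin n) K[X]}
    (hB : ∀ i j, i < j → B i j = 0) {a b : Fin n} (hA : ∀ j, b < j → A a j = 0) :
    twMatMul q A B a b = twMul q (A a b) (B b b) := by
  rw [twMatMul, of_apply]
  refine sum_eq_single b (fun j _ hj => ?_) (by simp)
  rcases hj.lt_or_gt with hjb | hbj
  · rw [hB j b hjb, twMul_zero_right]
  · rw [hA j hbj, twMul_zero_left]

lemma twMatMul_apply_of_lower_left {A B : Matrix (Fin n) (Fin n) K[X]}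
    (hA : ∀ i j, i < j → A i j = 0) {a b : Fin n} (hB : ∀ j, j < a → B j b = 0) :
    twMatMul q A B a b = twMul q (A a a) (B a b) := by
  rw [twMatMul, of_apply]
  refine sum_eq_single a (fun j _ hj => ?_) (by simp)
  rcases hj.lt_or_gt with hja | haj
  · rw [hB j hja, twMul_zero_right]
  · rw [hA a j haj, twMul_zero_left]

lemma twMul_diag_eq_of_twMatMul_eq {U Υ Υ' : Matrix (Fin n) (Fin n) K[X]}
    (hΥ : ∀ i j, i < j → Υ i j = 0) (hΥ' : ∀ i j, i < j → Υ' i j = 0)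
    (hcomm : twMatMul q U Υ = twMatMul q Υ' U) {a b : Fin n}
    (hrow : ∀ j, b < j → U a j = 0) (hcol : ∀ j, j < a → U j b = 0) :
    twMul q (U a b) (Υ b b) = twMul q (Υ' a a) (U a b) := by
  rw [← twMatMul_apply_of_lower_right hΥ hrow, hcomm, twMatMul_apply_of_lower_left hΥ' hcol]

/-- Induction on `a - b`: below the diagonal, the entries that `twMul_diag_eq_of_twMatMul_eq`
needs to vanish are closer to the diagonal than `(a, b)`. -/
lemma eq_zero_of_twMatMul_eq_of_coeff_zero (F : Type*) [Field F] [Algebra F K] (hq : 1 < q)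
    {θ : K} (hθ : Transcendental F θ) {U Υ Υ' : Matrix (Fin n) (Fin n) K[X]}
    (hU : ∀ i j, i < j → U i j = 0)
    (hΥ : ∀ i j, i < j → Υ i j = 0) (hΥ' : ∀ i j, i < j → Υ' i j = 0)
    (hΥθ : ∀ k, (Υ k k).coeff 0 = θ) (hΥ'θ : ∀ k, (Υ' k k).coeff 0 = θ)
    (hcomm : twMatMul q U Υ = twMatMul q Υ' U) (hU0 : ∀ i j, (U i j).coeff 0 = 0) :
    U = 0 := by
  suffices h : ∀ d (a b : Fin n), (a : ℕ) - b = d → U a b = 0 from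
    Matrix.ext fun a b => h _ a b rfl
  intro d
  induction d using Nat.strong_induction_on with
  | _ d ih =>
  intro a b hd
  rcases lt_or_ge a b with hab | hba
  · exact hU a b hab
  refine eq_zero_of_twMul_eq_of_coeff_zero F hq hθ (hΥθ b) (hΥ'θ a)
    (twMul_diag_eq_of_twMatMul_eq hΥ hΥ' hcomm (fun j hbj => ?_) (fun j hja => ?_)) (hU0 a b)
  · rcases lt_or_ge a j with haj | hja
    · exact hU a j haj
    · exact ih _ (by omega) a j rfl
  · rcases lt_or_ge j b with hjb | hbj
    · exact hU j b hjb
    · exact ih _ (by omega) j b rfl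

end TriangularMatrix

lemma IsTriangular.coeff_zero_diag {K : Type*} [Field K] {θ : K} {n : ℕ}
    {Υ : Matrix (Fin n) (Fin n) K[X]} {ψ : Fin n → K[X]} {r : Fin n → ℕ}
    (hΥ : IsTriangular θ Υ ψ r) (k : Fin n) : (Υ k k).coeff 0 = θ := by
  rw [hΥ.2.1 k]
  exact (hΥ.2.2 k.rev).2.1

/-- basic properties of triangular morphisms.
For lower triangular morphisms `U : Υ → Υ̂` of triangular t-modules:
(i) every diagonal entry `u_k = U k k` is a morphism of Drinfeld modules
`ψ_{k.rev} → ψ̂_{k.rev}`;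
(ii) if `K` has `A`-characteristic zero (`θ` transcendental over `𝔽_q`) and all constant
terms of the entries of `U` vanish, then `U = 0`; in particular (iii) in
`A`-characteristic zero the map `U ↦ ∂U` on triangular morphisms is injective. -/
theorem triangular_morphism_basic
    {K : Type*} [Field K] (p s q : ℕ) [Fact p.Prime] (hs : 0 < s) (hq : q = p ^ s)
    [Algebra (GaloisField p s) K] (θ : K) {n : ℕ}
    (Υ : Matrix (Fin n) (Fin n) (Polynomial K))
    (ψ : Fin n → Polynomial K) (r : Fin n → ℕ)
    (hΥ : IsTriangular θ Υ ψ r)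
    (Υ' : Matrix (Fin n) (Fin n) (Polynomial K))
    (ψ' : Fin n → Polynomial K) (r' : Fin n → ℕ)
    (hΥ' : IsTriangular θ Υ' ψ' r') :
    (∀ U : Matrix (Fin n) (Fin n) (Polynomial K),
      (∀ a b : Fin n, a < b → U a b = 0) →
      twMatMul q U Υ = twMatMul q Υ' U →
      ∀ k : Fin n, twMul q (U k k) (ψ k.rev) = twMul q (ψ' k.rev) (U k k)) ∧
    (Transcendental (GaloisField p s) θ →
      (∀ U : Matrix (Fin n) (Fin n) (Polynomial K),
        (∀ a b : Fin n, a < b → U a b = 0) →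
        twMatMul q U Υ = twMatMul q Υ' U →
        (∀ a b : Fin n, (U a b).coeff 0 = 0) → U = 0) ∧
      (∀ U U' : Matrix (Fin n) (Fin n) (Polynomial K),
        (∀ a b : Fin n, a < b → U a b = 0) →
        twMatMul q U Υ = twMatMul q Υ' U →
        (∀ a b : Fin n, a < b → U' a b = 0) →
        twMatMul q U' Υ = twMatMul q Υ' U' →
        (∀ a b : Fin n, (U a b).coeff 0 = (U' a b).coeff 0) → U = U')) := by
  have hq1 : 1 < q := hq ▸ Nat.one_lt_pow hs.ne' (Fact.out : p.Prime).one_lt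
  have : CharP K p :=
    charP_of_injective_algebraMap (algebraMap (GaloisField p s) K).injective p
  have hzero (hθ : Transcendental (GaloisField p s) θ) (U : Matrix (Fin n) (Fin n) K[X])
      (hU : ∀ a b : Fin n, a < b → U a b = 0) (hcomm : twMatMul q U Υ = twMatMul q Υ' U)
      (hU0 : ∀ a b : Fin n, (U a b).coeff 0 = 0) : U = 0 :=
    eq_zero_of_twMatMul_eq_of_coeff_zero _ hq1 hθ hU hΥ.1 hΥ'.1 hΥ.coeff_zero_diag
      hΥ'.coeff_zero_diag hcomm hU0
  refine ⟨fun U hU hcomm k => ?_, fun hθ => ⟨hzero hθ, fun U U' hU hcomm hU' hcomm' h0 => ?_⟩⟩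
  · simpa only [hΥ.2.1, hΥ'.2.1] using twMul_diag_eq_of_twMatMul_eq hΥ.1 hΥ'.1 hcomm
      (fun j hkj => hU k j hkj) (fun j hjk => hU j k hjk)
  · refine sub_eq_zero.mp (hzero hθ (U - U') (fun a b hab => by simp [hU a b hab, hU' a b hab])
      ?_ (fun a b => by simp [h0 a b]))
    rw [twMatMul_sub_left hq1.ne_bot, twMatMul_sub_right p hq, hcomm, hcomm']
end
end
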